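/- arXiv:1810.09767 — 3 statements merged into one kernel-verified Lean document; each statement's English description precedes it below -/
import Mathlib

section
/- For every integer r ≥ 2, if n = Σ_{j=1}^{r} r^(6^(r-j)), then every colouring of [3]^n with r colours contains a monochromatic combinatorial line. In particular, HJ(3,r) ≤ Σ_{j=1}^{r} r^(6^(r-j)). -/
/-!
A focusing argument with explicit bounds. Split the coordinates into blocks and, inside a block
of length `s`, use only the threshold lines `0…0 ∗…∗ 1…1`: their `0`- and `1`-points are step
words `0…0 1…1`, of which there are only `s + 1`. By induction on the number `k` of blocks, every
`r`-colouring has a monochromatic line or `k` lines through a common `2`-point (the focus), each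
with `0`- and `1`-point of one colour, the `k` colours distinct; moreover these families come
from a set of at most `N = ∏ (sᵢ + 1)²` candidates. To add a block of length `s ≥ N r^(k+1)`,
freeze it to each step word in turn: by pigeonhole two step words `a < b` yield the same family,
colours and focus colour. If the focus colour is among the `k` colours, a line of the family is
monochromatic; otherwise the threshold line of the new block whose `0`-point is the step word at
`b` and whose `1`-point is the one at `a`, paired with the old focus and with each old line, gives
`k + 1` focused lines. Once `k = r` every colour is used, so the focus closes a monochromatic
line. The block lengths `r^(6^m)` grow fast enough.
-/

open Combinatorics Finset Function

namespace HalesJewett3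

variable {ι ι' κ : Type*}

lemma exists_lt_map_eq_of_card_lt {α β : Type*} [LinearOrder α] [Fintype α] [Fintype β]
    (f : α → β) (h : Fintype.card β < Fintype.card α) : ∃ x y, x < y ∧ f x = f y := by
  obtain ⟨x, y, hne, hxy⟩ := Fintype.exists_ne_map_eq_of_card_lt f h
  rcases hne.lt_or_gt with hlt | hlt
  exacts [⟨x, y, hlt, hxy⟩, ⟨y, x, hlt, hxy.symm⟩]

lemma exists_mono_of_equiv {α : Type*} (e : ι ≃ ι')
    (h : ∀ χ : (ι → α) → κ, ∃ l : Line α ι, l.IsMono χ) (χ : (ι' → α) → κ) :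
    ∃ l : Line α ι', l.IsMono χ := by
  obtain ⟨l, c, hc⟩ := h fun v => χ (v ∘ e.symm)
  obtain ⟨i, hi⟩ := l.proper
  exact ⟨⟨l.idxFun ∘ e.symm, e i, by simp [hi]⟩, c, hc⟩

def stepWord (s a : ℕ) : Fin s → Fin 3 := fun p => if (p : ℕ) < a then 0 else 1

def blockLine {s : ℕ} (a b : Fin (s + 1)) (hab : a < b) : Line (Fin 3) (Fin s) where
  idxFun p := if (p : ℕ) < a then some 0 else if (p : ℕ) < b then none else some 1
  proper := ⟨⟨a, by omega⟩, by simp [hab]⟩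

section blockLine

variable {s : ℕ} {a b : Fin (s + 1)} (hab : a < b)

lemma blockLine_zero : blockLine a b hab 0 = stepWord s b := by
  funext p
  simp only [blockLine, stepWord, Line.coe_apply]
  split_ifs <;> first | rfl | omega

lemma blockLine_one : blockLine a b hab 1 = stepWord s a := by
  funext p
  simp only [blockLine, stepWord, Line.coe_apply]
  split_ifs <;> rfl

end blockLine

structure IsFocused (χ : (ι → Fin 3) → κ) {k : ℕ} (L : Fin k → Line (Fin 3) ι)
    (f : ι → Fin 3) : Prop where
  apply_two : ∀ t, L t 2 = f
  colour_zero_eq_one : ∀ t, χ (L t 0) = χ (L t 1)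
  injective_colour : Injective fun t => χ (L t 0)

lemma IsFocused.isMono {χ : (ι → Fin 3) → κ} {k : ℕ} {L : Fin k → Line (Fin 3) ι}
    {f : ι → Fin 3} (h : IsFocused χ L f) {t : Fin k} (ht : χ (L t 0) = χ f) :
    (L t).IsMono χ := by
  refine ⟨χ f, fun x => ?_⟩
  fin_cases x
  exacts [ht, (h.colour_zero_eq_one t).symm.trans ht, congrArg χ (h.apply_two t)]

-- The focus is recorded with the lines because for `k = 0` no line determines it.
def MonoOrFocused (κ : Type*) (k : ℕ) (ι : Type*) (N : ℕ) : Prop :=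
  ∃ 𝓕 : Finset ((Fin k → Line (Fin 3) ι) × (ι → Fin 3)), #𝓕 ≤ N ∧
    ∀ χ : (ι → Fin 3) → κ, (∃ l : Line (Fin 3) ι, l.IsMono χ) ∨ ∃ F ∈ 𝓕, IsFocused χ F.1 F.2

lemma monoOrFocused_zero : MonoOrFocused κ 0 ι 1 :=
  ⟨{(Fin.elim0, fun _ => 0)}, by simp, fun _ => Or.inr ⟨_, mem_singleton_self _,
    finZeroElim, finZeroElim, injective_of_subsingleton _⟩⟩

lemma MonoOrFocused.exists_mono [Fintype κ] {k N : ℕ} (h : MonoOrFocused κ k ι N)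
    (hk : Fintype.card κ ≤ k) (χ : (ι → Fin 3) → κ) : ∃ l : Line (Fin 3) ι, l.IsMono χ := by
  obtain ⟨𝓕, -, h⟩ := h
  obtain hmono | ⟨⟨L, f⟩, -, hfoc⟩ := h χ
  · exact hmono
  have hbij : Bijective fun t => χ (L t 0) :=
    (Fintype.bijective_iff_injective_and_card _).2
      ⟨hfoc.injective_colour, le_antisymm (Fintype.card_le_of_injective _ hfoc.injective_colour) (by simpa using hk)⟩
  obtain ⟨t, ht⟩ := hbij.2 (χ f)
  exact ⟨L t, hfoc.isMono ht⟩

def stepSlice {s : ℕ} (χ : (Fin s ⊕ ι → Fin 3) → κ) (a : ℕ) : (ι → Fin 3) → κ :=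
  fun w => χ (Sum.elim (stepWord s a) w)

def extendFamily {s k : ℕ} (a b : Fin (s + 1)) (hab : a < b) (L : Fin k → Line (Fin 3) ι)
    (f : ι → Fin 3) : (Fin (k + 1) → Line (Fin 3) (Fin s ⊕ ι)) × (Fin s ⊕ ι → Fin 3) :=
  (Fin.cons ((blockLine a b hab).horizontal f) fun t => (blockLine a b hab).prod (L t),
    Sum.elim (blockLine a b hab 2) f)

section extend

variable {s k : ℕ} {χ : (Fin s ⊕ ι → Fin 3) → κ} {a b : Fin (s + 1)} (hab : a < b)
  {L : Fin k → Line (Fin 3) ι} {f : ι → Fin 3}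

lemma isFocused_extendFamily (hfoc : IsFocused (stepSlice χ a) L f)
    (hcol : ∀ t, stepSlice χ b (L t 0) = stepSlice χ a (L t 0))
    (hfocus : stepSlice χ b f = stepSlice χ a f)
    (hnew : ∀ t, stepSlice χ a (L t 0) ≠ stepSlice χ a f) :
    IsFocused χ (extendFamily a b hab L f).1 (extendFamily a b hab L f).2 := by
  have hcolours : (fun t => χ ((extendFamily a b hab L f).1 t 0))
      = Fin.cons (stepSlice χ a f) fun t => stepSlice χ a (L t 0) := by
    funext t
    refine Fin.cases ?_ (fun t => ?_) t
    · simpa [extendFamily, blockLine_zero, stepSlice] using hfocus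
    · simpa [extendFamily, blockLine_zero, stepSlice] using hcol t
  refine ⟨fun t => ?_, fun t => ?_, ?_⟩
  · refine Fin.cases ?_ (fun t => ?_) t
    · simp [extendFamily]
    · simp [extendFamily, hfoc.apply_two t]
  · rw [congrFun hcolours t]
    refine Fin.cases ?_ (fun t => ?_) t
    · simp [extendFamily, blockLine_one, stepSlice]
    · simpa [extendFamily, blockLine_one, stepSlice] using hfoc.colour_zero_eq_one t
  · rw [hcolours, Fin.cons_injective_iff]
    exact ⟨fun ⟨t, ht⟩ => hnew t ht, hfoc.injective_colour⟩

lemma exists_mono_or_isFocused_extendFamily (hfoc : IsFocused (stepSlice χ a) L f)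
    (hcol : ∀ t, stepSlice χ b (L t 0) = stepSlice χ a (L t 0))
    (hfocus : stepSlice χ b f = stepSlice χ a f) :
    (∃ l : Line (Fin 3) (Fin s ⊕ ι), l.IsMono χ) ∨
      IsFocused χ (extendFamily a b hab L f).1 (extendFamily a b hab L f).2 := by
  by_cases hnew : ∃ t, stepSlice χ a (L t 0) = stepSlice χ a f
  · obtain ⟨t, ht⟩ := hnew
    obtain ⟨c, hc⟩ := hfoc.isMono ht
    exact Or.inl ⟨(L t).vertical (stepWord s a), c, by simpa [stepSlice] using hc⟩
  · rw [not_exists] at hnew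
    exact Or.inr (isFocused_extendFamily hab hfoc hcol hfocus hnew)

end extend

theorem MonoOrFocused.succ [Fintype κ] {k N s : ℕ} (h : MonoOrFocused κ k ι N)
    (hs : N * Fintype.card κ ^ (k + 1) ≤ s) :
    MonoOrFocused κ (k + 1) (Fin s ⊕ ι) ((s + 1) ^ 2 * N) := by
  classical
  obtain ⟨𝓕, h𝓕, hχ⟩ := h
  let extend (p : {ab : Fin (s + 1) × Fin (s + 1) // ab.1 < ab.2} × 𝓕) :
      (Fin (k + 1) → Line (Fin 3) (Fin s ⊕ ι)) × (Fin s ⊕ ι → Fin 3) :=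
    extendFamily p.1.1.1 p.1.1.2 p.1.2 p.2.1.1 p.2.1.2
  have hcard : #(univ.image extend) ≤ (s + 1) ^ 2 * N := by
    refine card_image_le.trans ?_
    rw [card_univ, Fintype.card_prod, Fintype.card_coe]
    gcongr
    exact (Fintype.card_subtype_le _).trans (by simp [sq])
  refine ⟨univ.image extend, hcard, fun χ => ?_⟩
  by_cases hmono : ∃ a : Fin (s + 1), ∃ l : Line (Fin 3) ι, l.IsMono (stepSlice χ a)
  · obtain ⟨a, l, c, hc⟩ := hmono
    exact Or.inl ⟨l.vertical (stepWord s a), c, by simpa [stepSlice] using hc⟩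
  rw [not_exists] at hmono
  choose F hF hfoc using fun a : Fin (s + 1) => (hχ (stepSlice χ a)).resolve_left (hmono a)
  obtain ⟨a, b, hab, hdata⟩ := exists_lt_map_eq_of_card_lt
    (fun a => ((⟨F a, hF a⟩ : 𝓕), fun t => stepSlice χ a ((F a).1 t 0), stepSlice χ a (F a).2))
    (by simpa [pow_succ, mul_assoc] using
      ((Nat.mul_le_mul_right _ h𝓕).trans hs).trans_lt s.lt_succ_self)
  simp only [Prod.mk.injEq, Subtype.mk.injEq] at hdata
  obtain ⟨hFab, hcol, hfocus⟩ := hdata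
  rw [← hFab] at hcol hfocus
  have hmem : extendFamily a b hab (F a).1 (F a).2 ∈ univ.image extend :=
    mem_image_of_mem extend (mem_univ (⟨(a, b), hab⟩, ⟨F a, hF a⟩))
  exact (exists_mono_or_isFocused_extendFamily hab (hfoc a) (fun t => (congrFun hcol t).symm)
    hfocus.symm).imp_right fun hfoc' => ⟨_, hmem, hfoc'⟩

lemma prod_sq_mul_pow_le_pow_six_pow {r : ℕ} (hr : 2 ≤ r) (K : ℕ) :
    (∏ m ∈ range K, (r ^ 6 ^ m + 1) ^ 2) * r ^ (K + 1) ≤ r ^ 6 ^ K := by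
  induction K with
  | zero => simp
  | succ K ih =>
    have hsucc : r ^ 6 ^ K + 1 ≤ r ^ (6 ^ K + 1) := by
      have : 1 ≤ r ^ 6 ^ K := Nat.one_le_pow _ _ (by omega)
      rw [pow_succ]
      nlinarith
    calc (∏ m ∈ range (K + 1), (r ^ 6 ^ m + 1) ^ 2) * r ^ (K + 1 + 1)
        = (∏ m ∈ range K, (r ^ 6 ^ m + 1) ^ 2) * r ^ (K + 1) * ((r ^ 6 ^ K + 1) ^ 2 * r) := by
          rw [prod_range_succ, pow_succ r (K + 1)]; ring
      _ ≤ r ^ 6 ^ K * ((r ^ (6 ^ K + 1)) ^ 2 * r) := by gcongr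
      _ = r ^ (3 * 6 ^ K + 3) := by ring
      _ ≤ r ^ 6 ^ (K + 1) := by
          have : 1 ≤ 6 ^ K := Nat.one_le_pow _ _ (by norm_num)
          exact Nat.pow_le_pow_right (by omega) (by rw [pow_succ]; omega)

theorem exists_monoOrFocused [Fintype κ] {r : ℕ} (hr : 2 ≤ r) (hκ : Fintype.card κ = r)
    (K : ℕ) : ∃ (ι : Type) (_ : Fintype ι), Fintype.card ι = ∑ m ∈ range K, r ^ 6 ^ m ∧
      MonoOrFocused κ K ι (∏ m ∈ range K, (r ^ 6 ^ m + 1) ^ 2) := by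
  induction K with
  | zero => exact ⟨Empty, inferInstance, by simp, by simpa using monoOrFocused_zero⟩
  | succ K ih =>
    obtain ⟨ι, _, hcard, h⟩ := ih
    refine ⟨Fin (r ^ 6 ^ K) ⊕ ι, inferInstance, by simp [hcard, sum_range_succ, add_comm], ?_⟩
    rw [prod_range_succ, mul_comm]
    exact h.succ (hκ ▸ prod_sq_mul_pow_le_pow_six_pow hr K)

end HalesJewett3

open HalesJewett3 in
/-- For every integer `r ≥ 2`, if `n = Σ_{j=1}^{r} r^(6^(r-j))`, then every
`r`-colouring of `[3]^n` contains a monochromatic combinatorial line; in particular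
`HJ(3,r) ≤ Σ_{j=1}^{r} r^(6^(r-j))`. -/
theorem HJ3_explicit_sum_bound :
    ∀ r : ℕ, 2 ≤ r →
      ∀ χ : (Fin (∑ j ∈ Finset.Icc 1 r, r ^ 6 ^ (r - j)) → Fin 3) → Fin r,
        ∃ l : Combinatorics.Line (Fin 3) (Fin (∑ j ∈ Finset.Icc 1 r, r ^ 6 ^ (r - j))),
          l.IsMono χ := by
  intro r hr
  obtain ⟨ι, _, hcard, h⟩ := exists_monoOrFocused (κ := Fin r) hr (Fintype.card_fin r) r
  have hsum : ∑ m ∈ range r, r ^ 6 ^ m = ∑ j ∈ Icc 1 r, r ^ 6 ^ (r - j) := by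
    refine sum_nbij' (r - ·) (r - ·) ?_ ?_ ?_ ?_ fun m hm => by
      rw [Nat.sub_sub_self (mem_range.1 hm).le]
    all_goals intro m hm; simp only [mem_range, mem_Icc] at hm ⊢; omega
  exact exists_mono_of_equiv (Fintype.equivFinOfCardEq (hcard.trans hsum))
    (h.exists_mono (by simp))
end

section
/- (Hales–Jewett theorem) For all positive integers m and r, there exists a positive integer n such that every r-colouring of [m]^n contains a monochromatic combinatorial line. -/
/-- Hales–Jewett theorem. For all positive integers `m` and `r` there is a
positive integer `n` such that every `r`-colouring of `[m]^n` contains a monochromatic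
combinatorial line. Words in `[m]^n` are modelled as functions `Fin n → Fin m`, and
combinatorial lines as `Combinatorics.Line (Fin m) (Fin n)`. -/
theorem hales_jewett :
    ∀ m r : ℕ, 0 < m → 0 < r → ∃ n : ℕ, 0 < n ∧
      ∀ χ : (Fin n → Fin m) → Fin r,
        ∃ l : Combinatorics.Line (Fin m) (Fin n), l.IsMono χ := by
  intro m r hm hr
  obtain ⟨ι, _, hι⟩ := Combinatorics.Line.exists_mono_in_high_dimension (Fin m) (Fin r)
  have hne : Nonempty ι := by
    obtain ⟨l, -⟩ := hι fun _ => ⟨0, hr⟩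
    obtain ⟨i, -⟩ := l.proper
    exact ⟨i⟩
  set n := Fintype.card ι with hn
  have e : ι ≃ Fin n := Fintype.equivFin ι
  refine ⟨n, Fintype.card_pos, fun χ => ?_⟩
  obtain ⟨l, c, hc⟩ := hι fun v => χ (v ∘ e.symm)
  obtain ⟨i, hi⟩ := l.proper
  refine ⟨⟨l.idxFun ∘ e.symm, ⟨e i, by simpa using hi⟩⟩, c, fun x => ?_⟩
  have key : (⟨l.idxFun ∘ e.symm, ⟨e i, by simpa using hi⟩⟩ :
      Combinatorics.Line (Fin m) (Fin n)) x = l x ∘ e.symm := by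
    funext j
    simp [Combinatorics.Line.coe_apply, Function.comp]
  rw [key]
  exact hc x
end

section
/- There exists an absolute constant c such that for every positive integer r and every integer N ≥ 2^(2^(c·r)), any r-colouring of the grid [N]^2 = {1,...,N} × {1,...,N} contains a monochromatic corner: points (x, y), (x + d, y), (x, y + d) with d ≥ 1, all lying in [N]^2 and all receiving the same colour. -/
/-!
Colour the pair `(a, b)` by `ξ a b := χ (a + 1) (N - b)`, so that corners become triples
`(a, b + d), (a + d, b + d), (a, b)`, and only look at pairs `a < b` in a set `A ⊆ [0, L)`.
A popular difference `s` has `≥ |A|² / (4L)` representations `(u, u + s)`, and a majority colour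
`c` among these pairs is taken by a set `B` of `≥ |A|² / (4rL)` of the `u`. If some `(u, w + s)`
with `u < w` in `B` also has colour `c`, it is the apex of a corner; otherwise
`(u, w) ↦ ξ u (w + s)` colours the pairs of `B` without using `c`, and we recurse on `B`.
As the density is squared in each round, `(8rL)^(2^j) ≤ 4rL · |A|^(2^j)` suffices for `j`
colours, whence the doubly exponential bound.
-/

open Finset Fintype

theorem exists_card_le_mul_card_fiber {β γ : Type*} [DecidableEq γ] {s : Finset β}
    {t : Finset γ} {f : β → γ} (hf : ∀ x ∈ s, f x ∈ t) (ht : t.Nonempty) :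
    ∃ y ∈ t, #s ≤ #t * #{x ∈ s | f x = y} := by
  obtain ⟨y, hy, hmax⟩ := t.exists_max_image (fun y ↦ #{x ∈ s | f x = y}) ht
  refine ⟨y, hy, ?_⟩
  calc #s = ∑ z ∈ t, #{x ∈ s | f x = z} := card_eq_sum_card_fiberwise hf
    _ ≤ #t • #{x ∈ s | f x = y} := sum_le_card_nsmul _ _ _ hmax

theorem exists_popular_difference {A : Finset ℕ} {L : ℕ} (hL : 0 < L) (hA : A ⊆ range L) :
    ∃ s, 0 < s ∧ (#A).choose 2 ≤ L * #{a ∈ A | a + s ∈ A} := by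
  set P := {p ∈ A ×ˢ A | p.1 < p.2}
  have hP : ∀ p ∈ P, p.2 - p.1 ∈ Icc 1 L := by
    intro p hp
    simp only [P, mem_filter, mem_product] at hp
    have := mem_range.1 (hA hp.1.2)
    rw [mem_Icc]
    omega
  obtain ⟨s, hs, hPs⟩ := exists_card_le_mul_card_fiber hP ⟨1, by simpa [mem_Icc]⟩
  have hfiber : #{p ∈ P | p.2 - p.1 = s} ≤ #{a ∈ A | a + s ∈ A} := by
    refine card_le_card_of_injOn Prod.fst (fun p hp ↦ ?_) (fun p hp q hq hpq ↦ ?_)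
    · simp only [P, mem_filter, mem_product, coe_filter, Set.mem_ofPred_eq] at hp ⊢
      obtain ⟨⟨⟨hp₁, hp₂⟩, hlt⟩, rfl⟩ := hp
      exact ⟨hp₁, by rwa [Nat.add_sub_cancel' hlt.le]⟩
    · simp only [P, mem_filter, coe_filter, Set.mem_ofPred_eq] at hp hq
      exact Prod.ext hpq (by omega)
  refine ⟨s, (mem_Icc.1 hs).1, ?_⟩
  calc (#A).choose 2 = #P := card_product_filter_lt.symm
    _ ≤ L * #{p ∈ P | p.2 - p.1 = s} := by simpa using hPs
    _ ≤ L * #{a ∈ A | a + s ∈ A} := Nat.mul_le_mul_left _ hfiber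

theorem sq_le_four_mul_choose_two {n : ℕ} (hn : 2 ≤ n) : n ^ 2 ≤ 4 * n.choose 2 := by
  have h := Nat.mul_div_cancel' (Nat.even_mul_pred_self n).two_dvd
  rw [← Nat.choose_two_right] at h
  obtain ⟨k, rfl⟩ := Nat.exists_eq_add_of_le hn
  rw [show 2 + k - 1 = k + 1 by omega] at h
  nlinarith

theorem two_le_of_pow_le {K n e : ℕ} (hK : 0 < K) (he : e ≠ 0) (h : (2 * K) ^ e ≤ K * n ^ e) :
    2 ≤ n := by
  by_contra! hn
  have : K * n ^ e ≤ K := by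
    simpa using Nat.mul_le_mul_left K (pow_le_one₀ (Nat.zero_le n) (by omega))
  have := Nat.le_self_pow he (2 * K)
  omega

theorem pow_le_of_sq_le {K n m e : ℕ} (hK : 0 < K) (h : (2 * K) ^ (2 * e) ≤ K * n ^ (2 * e))
    (hnm : n ^ 2 ≤ K * m) : (2 * K) ^ e ≤ K * m ^ e := by
  refine Nat.le_of_mul_le_mul_left ?_ (pow_pos hK e)
  calc K ^ e * (2 * K) ^ e ≤ (2 * K) ^ e * (2 * K) ^ e := by gcongr; omega
    _ = (2 * K) ^ (2 * e) := by ring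
    _ ≤ K * (n ^ 2) ^ e := by rwa [← pow_mul]
    _ ≤ K * (K * m) ^ e := by gcongr
    _ = K ^ e * (K * m ^ e) := by ring

theorem eight_mul_pow_le {r : ℕ} (hr : 0 < r) : (8 * r) ^ 2 ^ r ≤ 2 ^ 2 ^ (3 * r) := by
  have h₁ := Nat.lt_two_pow_self (n := r)
  have h₂ : r + 3 ≤ 2 ^ (2 * r) := by
    rw [pow_mul']
    nlinarith
  calc (8 * r) ^ 2 ^ r ≤ (2 ^ 2 ^ (2 * r)) ^ 2 ^ r := by
        gcongr
        calc 8 * r ≤ 2 ^ (r + 3) := by rw [pow_add]; omega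
          _ ≤ 2 ^ 2 ^ (2 * r) := Nat.pow_le_pow_right (by norm_num) h₂
    _ = 2 ^ 2 ^ (3 * r) := by rw [← pow_mul, ← pow_add]; ring_nf

section Corners

variable {α : Type*}

/-- Reflected by `(a, b) ↦ (a + 1, N - b)`, the points `(a, b + d)`, `(a + d, b + d)`, `(a, b)`
form a corner of `[N]²`. -/
def HasMonoCorner (ξ : ℕ → ℕ → α) (A : Finset ℕ) : Prop :=
  ∃ a b d, 0 < d ∧ a ∈ A ∧ a + d ∈ A ∧ b ∈ A ∧ b + d ∈ A ∧
    ξ a (b + d) = ξ (a + d) (b + d) ∧ ξ a (b + d) = ξ a b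

theorem HasMonoCorner.of_shift {ξ : ℕ → ℕ → α} {A B : Finset ℕ} {s : ℕ} (hBA : B ⊆ A)
    (hBs : ∀ u ∈ B, u + s ∈ A) (h : HasMonoCorner (fun a b ↦ ξ a (b + s)) B) :
    HasMonoCorner ξ A := by
  obtain ⟨a, b, d, hd, ha, had, hb, hbd, h₁, h₂⟩ := h
  refine ⟨a, b + s, d, hd, hBA ha, hBA had, hBs b hb, ?_, ?_, ?_⟩ <;>
    rw [add_right_comm b s d]
  exacts [hBs _ hbd, h₁, h₂]

theorem hasMonoCorner_of_apex {ξ : ℕ → ℕ → α} {A : Finset ℕ} {s u w : ℕ} (huw : u < w)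
    (hu : u ∈ A) (hus : u + s ∈ A) (hw : w ∈ A) (hws : w + s ∈ A)
    (hw_apex : ξ u (w + s) = ξ w (w + s)) (hu_apex : ξ u (w + s) = ξ u (u + s)) :
    HasMonoCorner ξ A := by
  obtain ⟨d, rfl⟩ := Nat.exists_eq_add_of_lt huw
  refine ⟨u, u + s, d + 1, d.succ_pos, hu, ?_, hus, ?_, ?_, ?_⟩ <;>
    simp only [← add_assoc, add_right_comm u s] at *
  exacts [hw, hws, hw_apex, hu_apex]

theorem hasMonoCorner_of_dense [Fintype α] [DecidableEq α] {L : ℕ} (hL : 0 < L)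
    {A : Finset ℕ} (hA : A ⊆ range L) {ξ : ℕ → ℕ → α} {C : Finset α}
    (hξ : ∀ a ∈ A, ∀ b ∈ A, a < b → ξ a b ∈ C)
    (hdense : (2 * (4 * card α * L)) ^ 2 ^ #C ≤ 4 * card α * L * #A ^ 2 ^ #C) :
    HasMonoCorner ξ A := by
  induction C using Finset.strongInduction generalizing A ξ with | H C ih =>
  set K := 4 * card α * L
  have hK : 0 < K := by have := card_pos_iff.2 ⟨ξ 0 0⟩; positivity
  have hn : 2 ≤ #A := two_le_of_pow_le hK (by positivity) hdense
  have hC : C.Nonempty := ⟨_, hξ _ (min'_mem A _) _ (max'_mem A _) (min'_lt_max'_of_card A hn)⟩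
  obtain ⟨s, hs, hpop⟩ := exists_popular_difference hL hA
  set A' := {u ∈ A | u + s ∈ A}
  have hA' : ∀ u ∈ A', u ∈ A ∧ u + s ∈ A := fun u hu ↦ mem_filter.1 hu
  obtain ⟨c, hc, hmaj⟩ := exists_card_le_mul_card_fiber (f := fun u ↦ ξ u (u + s))
    (fun u hu ↦ hξ _ (hA' u hu).1 _ (hA' u hu).2 (by omega)) hC
  set B := {u ∈ A' | ξ u (u + s) = c}
  have hB : ∀ u ∈ B, u ∈ A ∧ u + s ∈ A ∧ ξ u (u + s) = c := fun u hu ↦ by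
    simp only [B, A', mem_filter] at hu
    exact ⟨hu.1.1, hu.1.2, hu.2⟩
  by_cases hapex : ∃ u ∈ B, ∃ w ∈ B, u < w ∧ ξ u (w + s) = c
  · obtain ⟨u, hu, w, hw, huw, hcol⟩ := hapex
    obtain ⟨hu, hus, hu_c⟩ := hB u hu
    obtain ⟨hw, hws, hw_c⟩ := hB w hw
    exact hasMonoCorner_of_apex huw hu hus hw hws (hcol.trans hw_c.symm)
      (hcol.trans hu_c.symm)
  push Not at hapex
  refine HasMonoCorner.of_shift (B := B) (fun u hu ↦ (hB u hu).1) (fun u hu ↦ (hB u hu).2.1) ?_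
  have hsq : #A ^ 2 ≤ K * #B :=
    calc #A ^ 2 ≤ 4 * (#A).choose 2 := sq_le_four_mul_choose_two hn
      _ ≤ 4 * (L * (card α * #B)) := by
          gcongr
          exact hpop.trans (Nat.mul_le_mul_left L (hmaj.trans
            (Nat.mul_le_mul_right _ (card_le_univ C))))
      _ = K * #B := by ring
  refine ih (C.erase c) (erase_ssubset hc) ((filter_subset _ _).trans
    ((filter_subset _ _).trans hA)) (fun u hu w hw huw ↦ ?_) (pow_le_of_sq_le hK ?_ hsq)
  · exact mem_erase.2 ⟨hapex u hu w hw huw, hξ _ (hB u hu).1 _ (hB w hw).2.1 (by omega)⟩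
  · rwa [← pow_succ', card_erase_add_one hc]

end Corners

/-- coloured corners theorem, with doubly exponential bound.
There is an absolute constant `c` such that for every positive integer `r` and every
`N ≥ 2^(2^(c·r))`, any `r`-colouring of the grid `[N]² = {1,…,N} × {1,…,N}` contains a
monochromatic corner: points `(x, y)`, `(x + d, y)`, `(x, y + d)` with `d ≥ 1`, all lying
in `[N]²` and all receiving the same colour. -/
theorem corners_doubly_exponential :
    ∃ c : ℕ, 0 < c ∧ ∀ r : ℕ, 0 < r → ∀ N : ℕ, 2 ^ 2 ^ (c * r) ≤ N →
      ∀ χ : ℕ → ℕ → Fin r,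
        ∃ x y d : ℕ, 1 ≤ x ∧ 1 ≤ y ∧ 1 ≤ d ∧ x + d ≤ N ∧ y + d ≤ N ∧
          χ x y = χ (x + d) y ∧ χ x y = χ x (y + d) := by
  refine ⟨3, by norm_num, fun r hr N hN χ ↦ ?_⟩
  have hN : (8 * r) ^ 2 ^ r ≤ N := (eight_mul_pow_le hr).trans hN
  have hN₀ : 0 < N := (by positivity : 0 < (8 * r) ^ 2 ^ r).trans_le hN
  have hdense : (2 * (4 * r * N)) ^ 2 ^ r ≤ 4 * r * N * N ^ 2 ^ r :=
    calc (2 * (4 * r * N)) ^ 2 ^ r = (8 * r) ^ 2 ^ r * N ^ 2 ^ r := by ring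
      _ ≤ 4 * r * N * N ^ 2 ^ r := by gcongr; nlinarith
  obtain ⟨a, b, d, hd, ha, had, hb, hbd, h₁, h₂⟩ :=
    hasMonoCorner_of_dense (ξ := fun a b ↦ χ (a + 1) (N - b)) (C := univ) hN₀ subset_rfl
      (fun _ _ _ _ _ ↦ mem_univ _) (by simpa using hdense)
  simp only [mem_range] at ha had hb hbd
  refine ⟨a + 1, N - (b + d), d, by omega, by omega, hd, by omega, by omega, ?_, ?_⟩
  · simpa only [add_right_comm a d 1] using h₁
  · rwa [show N - (b + d) + d = N - b by omega]
end
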